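/- Let (x_i)_{i∈I} be a finite nonempty family of points of ℝ^n and let τ > 0. Define w_i(y) := exp(−‖y−x_i‖²/(2τ)), π_i(y) := w_i(y)/Σ_{j∈I} w_j(y), b(y) := Σ_{j∈I} π_j(y) x_j, x̃_i(y) := x_i − b(y), and ṁ(y) := y − b(y). Then ṁ is differentiable and for every y, v ∈ ℝ^n the derivative of ṁ at y applied to v equals v − τ^{−1} Σ_{i∈I} π_i(y) ⟨x̃_i(y), v⟩ x̃_i(y). -/

import Mathlib

open scoped RealInnerProductSpace BigOperators

noncomputable section

/-- Gaussian weight `w_i(y) = exp(−‖y−x_i‖²/(2τ))`. -/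
def gaussW {n : ℕ} {I : Type*} (x : I → EuclideanSpace ℝ (Fin n)) (τ : ℝ) (i : I)
    (y : EuclideanSpace ℝ (Fin n)) : ℝ :=
  Real.exp (-‖y - x i‖ ^ 2 / (2 * τ))

/-- Normalized weight `π_i(y) = w_i(y)/∑_j w_j(y)`. -/
def piW {n : ℕ} {I : Type*} [Fintype I] (x : I → EuclideanSpace ℝ (Fin n)) (τ : ℝ) (i : I)
    (y : EuclideanSpace ℝ (Fin n)) : ℝ :=
  gaussW x τ i y / ∑ j, gaussW x τ j y

/-- The barycenter `b(y) = ∑_j π_j(y) x_j`. -/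
def bary {n : ℕ} {I : Type*} [Fintype I] (x : I → EuclideanSpace ℝ (Fin n)) (τ : ℝ)
    (y : EuclideanSpace ℝ (Fin n)) : EuclideanSpace ℝ (Fin n) :=
  ∑ j, piW x τ j y • x j

/-- The centered point `x̃_i(y) = x_i − b(y)`. -/
def xtil {n : ℕ} {I : Type*} [Fintype I] (x : I → EuclideanSpace ℝ (Fin n)) (τ : ℝ) (i : I)
    (y : EuclideanSpace ℝ (Fin n)) : EuclideanSpace ℝ (Fin n) :=
  x i - bary x τ y

/-- The drift `ṁ(y) = y − b(y)`. -/
def mdot {n : ℕ} {I : Type*} [Fintype I] (x : I → EuclideanSpace ℝ (Fin n)) (τ : ℝ)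
    (y : EuclideanSpace ℝ (Fin n)) : EuclideanSpace ℝ (Fin n) :=
  y - bary x τ y

/-!
The weights `π_i` are the softmax of the exponents `φ_i(y) = -‖y - x_i‖² / (2τ)`, whose
gradients are `τ⁻¹ (x_i - y)`. The softmax rule `dπ_i = π_i (dφ_i - ∑_j π_j dφ_j)` and
`∑_j π_j = 1` give `dπ_i(v) = τ⁻¹ π_i ⟪x̃_i, v⟫`, hence `db(v) = τ⁻¹ ∑_i π_i ⟪x̃_i, v⟫ x_i`.
Since the coefficients `π_i ⟪x̃_i, v⟫` sum to `⟪∑_i π_i x̃_i, v⟫ = 0`, each `x_i` may be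
replaced by `x̃_i = x_i - b`.
-/

open Real

section Softmax

variable {E ι : Type*} [NormedAddCommGroup E] [NormedSpace ℝ E] [Fintype ι] [Nonempty ι]
  {φ : ι → E → ℝ} {φ' : ι → E →L[ℝ] ℝ} {y : E}

theorem hasFDerivAt_log_sum_exp (hφ : ∀ j, HasFDerivAt (φ j) (φ' j) y) :
    HasFDerivAt (fun z => log (∑ j, exp (φ j z)))
      (∑ j, (exp (φ j y) / ∑ k, exp (φ k y)) • φ' j) y := by
  have hpos : 0 < ∑ k, exp (φ k y) := Finset.sum_pos (fun k _ => exp_pos _) Finset.univ_nonempty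
  convert (HasFDerivAt.fun_sum fun j _ => (hφ j).exp).log hpos.ne' using 1
  simp only [Finset.smul_sum, smul_smul, div_eq_inv_mul]

-- `exp (φ i) / ∑ j, exp (φ j) = exp (φ i - log ∑ j, exp (φ j))`, so only the chain rule is needed.
theorem hasFDerivAt_exp_div_sum_exp (hφ : ∀ j, HasFDerivAt (φ j) (φ' j) y) (i : ι) :
    HasFDerivAt (fun z => exp (φ i z) / ∑ j, exp (φ j z))
      ((exp (φ i y) / ∑ j, exp (φ j y)) •
        (φ' i - ∑ j, (exp (φ j y) / ∑ k, exp (φ k y)) • φ' j)) y := by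
  have hpos : ∀ z, 0 < ∑ k, exp (φ k z) := fun z =>
    Finset.sum_pos (fun k _ => exp_pos _) Finset.univ_nonempty
  simpa only [Pi.sub_apply, exp_sub, exp_log (hpos _)] using
    ((hφ i).sub (hasFDerivAt_log_sum_exp hφ)).exp

end Softmax

theorem Finset.sum_smul_sub_const {ι R M : Type*} [Ring R] [AddCommGroup M] [Module R M]
    (s : Finset ι) (p : ι → R) (x : ι → M) (c : M) :
    ∑ i ∈ s, p i • (x i - c) = ∑ i ∈ s, p i • x i - (∑ i ∈ s, p i) • c := by
  simp only [smul_sub, Finset.sum_sub_distrib, Finset.sum_smul]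

theorem hasFDerivAt_neg_norm_sub_sq_div {F : Type*} [NormedAddCommGroup F]
    [InnerProductSpace ℝ F] (τ : ℝ) (a y : F) :
    HasFDerivAt (fun z => -‖z - a‖ ^ 2 / (2 * τ)) (τ⁻¹ • innerSL ℝ (a - y)) y := by
  have h := (((hasFDerivAt_id y).sub_const a).norm_sq.neg).mul_const (2 * τ)⁻¹
  simp only [← div_eq_mul_inv] at h
  refine h.congr_fderiv ?_
  ext v
  simp
  ring

section Drift

variable {n : ℕ} {I : Type*} [Fintype I] (x : I → EuclideanSpace ℝ (Fin n)) (τ : ℝ)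
  [Nonempty I]

theorem sum_piW (y : EuclideanSpace ℝ (Fin n)) : ∑ j, piW x τ j y = 1 := by
  simp only [piW, ← Finset.sum_div]
  exact div_self (Finset.sum_pos (fun j _ => exp_pos _) Finset.univ_nonempty).ne'

theorem sum_piW_smul_xtil (y : EuclideanSpace ℝ (Fin n)) :
    ∑ j, piW x τ j y • xtil x τ j y = 0 := by
  simp only [xtil, Finset.sum_smul_sub_const, sum_piW, one_smul, bary, sub_self]

theorem hasFDerivAt_piW (i : I) (y : EuclideanSpace ℝ (Fin n)) :
    HasFDerivAt (piW x τ i) (piW x τ i y • τ⁻¹ • innerSL ℝ (xtil x τ i y)) y := by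
  refine (hasFDerivAt_exp_div_sum_exp
    (fun j => hasFDerivAt_neg_norm_sub_sq_div τ (x j) y) i).congr_fderiv ?_
  have hmean : ∑ j, piW x τ j y • (x j - y) = bary x τ y - y := by
    rw [Finset.sum_smul_sub_const, sum_piW, one_smul, bary]
  change piW x τ i y • (τ⁻¹ • innerSL ℝ (x i - y) - ∑ j, piW x τ j y • τ⁻¹ • innerSL ℝ (x j - y))
    = _
  rw [Finset.sum_congr rfl fun j _ => smul_comm (piW x τ j y) τ⁻¹ _, ← Finset.smul_sum]
  simp only [← map_smul, ← map_sum, hmean, ← smul_sub, ← map_sub, sub_sub_sub_cancel_right, xtil]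

theorem hasFDerivAt_mdot (y : EuclideanSpace ℝ (Fin n)) :
    HasFDerivAt (mdot x τ) (ContinuousLinearMap.id ℝ _ -
      τ⁻¹ • ∑ i, piW x τ i y • (innerSL ℝ (xtil x τ i y)).smulRight (xtil x τ i y)) y := by
  have hbary := HasFDerivAt.fun_sum (u := Finset.univ)
    fun j _ => (hasFDerivAt_piW x τ j y).smul_const (x j)
  refine ((hasFDerivAt_id y).sub hbary).congr_fderiv ?_
  ext1 v
  let c i := piW x τ i y * ⟪xtil x τ i y, v⟫
  have hc : ∑ i, c i = 0 := by
    simp only [c, ← real_inner_smul_left, ← sum_inner, sum_piW_smul_xtil, inner_zero_left]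
  have hcentered : ∑ i, c i • xtil x τ i y = ∑ i, c i • x i := by
    rw [← sub_zero (∑ i, c i • x i), ← zero_smul ℝ (bary x τ y), ← hc]
    exact Finset.sum_smul_sub_const _ c x _
  simp only [sub_apply, ContinuousLinearMap.id_apply, smul_apply, sum_apply,
    ContinuousLinearMap.smulRight_apply, innerSL_apply_apply, smul_smul, smul_eq_mul]
  rw [hcentered, Finset.smul_sum]
  congr 1
  refine Finset.sum_congr rfl fun i _ => ?_
  rw [smul_smul]
  congr 1
  simp only [c]
  ring

end Drift

theorem statement2_general {n : ℕ} {I : Type*} [Fintype I] [Nonempty I]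
    (x : I → EuclideanSpace ℝ (Fin n)) (τ : ℝ) :
    Differentiable ℝ (mdot x τ) ∧
      ∀ (y v : EuclideanSpace ℝ (Fin n)),
        fderiv ℝ (mdot x τ) y v
          = v - τ⁻¹ • ∑ i, (piW x τ i y * ⟪xtil x τ i y, v⟫) • xtil x τ i y := by
  refine ⟨fun y => (hasFDerivAt_mdot x τ y).differentiableAt, fun y v => ?_⟩
  rw [(hasFDerivAt_mdot x τ y).fderiv]
  simp [Finset.smul_sum, smul_smul, mul_assoc]

/-- eq. (60) of the paper. For a finite nonempty family `(x i)` of points of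
`ℝ^n` and `τ > 0`, the drift `ṁ(y) = y − b(y)` is differentiable and its derivative at `y`
applied to `v` equals `v − τ⁻¹ ∑_i π_i(y) ⟪x̃_i(y), v⟫ x̃_i(y)`. -/
theorem statement2 {n : ℕ} {I : Type*} [Fintype I] [Nonempty I]
    (x : I → EuclideanSpace ℝ (Fin n)) (τ : ℝ) (hτ : 0 < τ) :
    Differentiable ℝ (mdot x τ) ∧
      ∀ (y v : EuclideanSpace ℝ (Fin n)),
        fderiv ℝ (mdot x τ) y v
          = v - τ⁻¹ • ∑ i, (piW x τ i y * ⟪xtil x τ i y, v⟫) • xtil x τ i y :=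
  statement2_general x τ

end
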